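/- A Coxeter group of rank n (with Coxeter system (W,S), |S| = n) cannot be generated by fewer than n reflections, where a reflection is any conjugate of an element of S. -/

import Mathlib

/-!
Tits' geometric representation `ρ` of `W` on `ℝ^S` sends each simple reflection `sᵢ` to a linear
reflection negating the basis vector `αᵢ`, so every reflection `t = w sᵢ w⁻¹` acts as a
reflection as well: `ρ t - 1` has rank one, with image spanned by `ρ w αᵢ`. If `T` generates `W`,
then `ρ g - 1` has image in the span `U` of these `|T|` vectors for every `g ∈ W`, since
`ρ (g h) - 1 = (ρ g - 1) ρ h + (ρ h - 1)`. Taking `g = sᵢ` gives `αᵢ ∈ U`, so `U = ℝ^S` and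
`|S| ≤ |T|`.
-/

open Real Module Polynomial.Chebyshev

lemma Polynomial.Chebyshev.S_eval_two_mul_cos_pi_div_sub_one {k : ℕ} (hk : 2 ≤ k) :
    (S ℝ (k - 1)).eval (2 * cos (π / k)) = 0 := by
  have hk' : (2 : ℝ) ≤ k := by exact_mod_cast hk
  have hsin : sin (π / k) ≠ 0 := (sin_pos_of_pos_of_lt_pi (by positivity)
    (by rw [div_lt_iff₀ (by positivity)]; nlinarith [pi_pos])).ne'
  have h := S_two_mul_real_cos (π / k) (k - 1)
  rw [show (((k - 1 : ℤ) : ℝ) + 1) * (π / k) = π by field_simp; push_cast; ring, sin_pi] at h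
  exact (mul_eq_zero.1 h).resolve_right hsin

lemma Polynomial.Chebyshev.S_add_S_sub_one_eval_two_mul_cos_two_pi_div {k : ℕ} (hk : 1 ≤ k) :
    (S ℝ k).eval (2 * cos (2 * π / (2 * k + 1))) +
      (S ℝ (k - 1)).eval (2 * cos (2 * π / (2 * k + 1))) = 0 := by
  set θ := 2 * π / (2 * k + 1)
  have hk' : (1 : ℝ) ≤ k := by exact_mod_cast hk
  have hsin : sin θ ≠ 0 := (sin_pos_of_pos_of_lt_pi (by positivity)
    (by rw [div_lt_iff₀ (by positivity)]; nlinarith [pi_pos])).ne'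
  have hθ : (2 * k + 1) * θ = 2 * π := by simp only [θ]; field_simp
  have h := congrArg₂ (· + ·) (S_two_mul_real_cos θ k) (S_two_mul_real_cos θ (k - 1))
  simp only [← add_mul] at h
  rw [show ((k : ℤ) + 1 : ℝ) * θ = 2 * π - k * θ by push_cast; linarith,
    show (((k - 1 : ℤ) : ℝ) + 1) * θ = k * θ by push_cast; ring, sin_two_pi_sub,
    neg_add_cancel] at h
  exact (mul_eq_zero.1 h).resolve_right hsin

lemma Module.reflection_mul_reflection_pow_eq_one {V : Type*} [AddCommGroup V] [Module ℝ V]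
    {x y : V} {f g : Dual ℝ V} (hf : f x = 2) (hg : g y = 2) {m : ℕ} (hm : 2 ≤ m)
    (hfy : f y = -2 * cos (π / m)) (hgx : g x = -2 * cos (π / m)) :
    (reflection hf * reflection hg) ^ m = 1 := by
  ext z
  have ht : 2 * cos (2 * π / m) = f y * g x - 2 := by
    rw [hfy, hgx, mul_div_assoc, cos_two_mul]; ring
  -- The coefficients in this formula are products of Chebyshev values that vanish for `m ≥ 3`;
  -- for `m = 2` they do not, but then `f y = g x = 0`.
  rw [reflection_mul_reflection_pow_apply hf hg m z _ ht, LinearEquiv.coe_one, id_eq]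
  obtain rfl | hm := hm.eq_or_lt
  · have hcos : cos (π / (2 : ℕ)) = 0 := by push_cast; exact cos_pi_div_two
    norm_num [hfy, hgx, hcos, S_zero, S_one, S_neg_one]
    module
  obtain ⟨k, rfl | rfl⟩ := Nat.even_or_odd' m
  · have h := S_eval_two_mul_cos_pi_div_sub_one (k := k) (by omega)
    rw [show 2 * π / ((2 * k : ℕ) : ℝ) = π / k by push_cast; field_simp] at *
    rw [show ((2 * k : ℕ) - 2 : ℤ) / 2 = k - 1 by omega,
      show ((2 * k : ℕ) - 1 : ℤ) / 2 = k - 1 by omega, h]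
    simp
  · have h := S_add_S_sub_one_eval_two_mul_cos_two_pi_div (k := k) (by omega)
    push_cast at *
    rw [show ((2 * k + 1 : ℤ) - 2) / 2 = k - 1 by omega,
      show ((2 * k + 1 : ℤ) - 1) / 2 = k by omega,
      show ((2 * k + 1 : ℤ) - 3) / 2 = k - 1 by omega,
      show (2 * k + 1 : ℤ) / 2 = k by omega, h]
    simp

lemma MonoidHom.apply_sub_self_mem_of_mem_closure {G R V : Type*} [Group G] [Ring R]
    [AddCommGroup V] [Module R V] (ρ : G →* V ≃ₗ[R] V) {T : Set G} {U : Submodule R V}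
    (hT : ∀ t ∈ T, ∀ v, ρ t v - v ∈ U) {g : G} (hg : g ∈ Subgroup.closure T) (v : V) :
    ρ g v - v ∈ U := by
  induction hg using Subgroup.closure_induction generalizing v with
  | mem t ht => exact hT t ht v
  | one => simp
  | mul g h _ _ hg hh =>
    rw [map_mul, LinearEquiv.mul_apply, ← sub_add_sub_cancel _ (ρ h v)]
    exact U.add_mem (hg _) (hh v)
  | inv g _ hg =>
    have h := hg (ρ g⁻¹ v)
    rwa [← LinearEquiv.mul_apply, ← map_mul, mul_inv_cancel, map_one, LinearEquiv.coe_one, id_eq,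
      ← neg_mem_iff, neg_sub] at h

namespace CoxeterMatrix

variable {B : Type*} [Fintype B] (M : CoxeterMatrix B)

/-- The map `2 B(αᵢ, ·)` for Tits' bilinear form `B(αᵢ, αⱼ) = -cos (π / M i j)`. The junk value
`π / 0 = 0` gives `B(αᵢ, αⱼ) = -1` when `M i j = 0` (that is, `mᵢⱼ = ∞`), the standard choice. -/
noncomputable def simpleCoroot (i : B) : Dual ℝ (B → ℝ) :=
  ∑ j, (-2 * cos (π / M i j)) • LinearMap.proj j

variable [DecidableEq B]

lemma simpleCoroot_single (i j : B) :
    M.simpleCoroot i (Pi.single j 1) = -2 * cos (π / M i j) := by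
  simp [simpleCoroot, Pi.single_apply]

lemma simpleCoroot_single_self (i : B) : M.simpleCoroot i (Pi.single i 1) = 2 := by
  simp [simpleCoroot_single]

noncomputable def geometricReflection (i : B) : (B → ℝ) ≃ₗ[ℝ] (B → ℝ) :=
  reflection (M.simpleCoroot_single_self i)

lemma isLiftable_geometricReflection : M.IsLiftable M.geometricReflection := by
  intro i j
  obtain rfl | hij := eq_or_ne i j
  · rw [M.diagonal, pow_one]
    exact LinearEquiv.ext (involutive_reflection _)
  obtain h0 | hpos := Nat.eq_zero_or_pos (M i j)
  · rw [h0, pow_zero]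
  refine reflection_mul_reflection_pow_eq_one _ _ ?_ (M.simpleCoroot_single i j) ?_
  · have := M.off_diagonal i j hij
    omega
  · rw [simpleCoroot_single, M.symmetric]

end CoxeterMatrix

namespace CoxeterSystem

variable {B W : Type*} [Fintype B] [DecidableEq B] [Group W] {M : CoxeterMatrix B}
  (cs : CoxeterSystem M W)

noncomputable def geometricRepresentation : W →* (B → ℝ) ≃ₗ[ℝ] (B → ℝ) :=
  cs.lift ⟨M.geometricReflection, M.isLiftable_geometricReflection⟩

lemma geometricRepresentation_simple (i : B) :
    cs.geometricRepresentation (cs.simple i) = M.geometricReflection i :=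
  cs.lift_apply_simple _ i

lemma IsReflection.exists_geometricRepresentation_apply_sub_self_mem {t : W}
    (ht : cs.IsReflection t) :
    ∃ β : B → ℝ, ∀ v, cs.geometricRepresentation t v - v ∈ ℝ ∙ β := by
  obtain ⟨w, i, rfl⟩ := ht
  refine ⟨cs.geometricRepresentation w (Pi.single i 1), fun v => ?_⟩
  rw [Submodule.mem_span_singleton]
  refine ⟨-M.simpleCoroot i (cs.geometricRepresentation w⁻¹ v), ?_⟩
  simp [LinearEquiv.mul_apply, geometricRepresentation_simple, CoxeterMatrix.geometricReflection,
    reflection_apply]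

end CoxeterSystem

theorem coxeter_not_generated_by_fewer_reflections
    {B : Type*} [Fintype B] {W : Type*} [Group W]
    {M : CoxeterMatrix B} (cs : CoxeterSystem M W)
    (T : Finset W) (hrefl : ∀ t ∈ T, cs.IsReflection t)
    (hgen : Subgroup.closure (T : Set W) = ⊤) :
    Fintype.card B ≤ T.card := by
  classical
  set ρ := cs.geometricRepresentation
  choose! β hβ using fun t ht => (hrefl t ht).exists_geometricRepresentation_apply_sub_self_mem
  set U := Submodule.span ℝ (T.image β : Set (B → ℝ))
  have hU (w : W) (v : B → ℝ) : ρ w v - v ∈ U := by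
    refine ρ.apply_sub_self_mem_of_mem_closure (fun t ht v => ?_) (hgen ▸ Subgroup.mem_top w) v
    exact (U.span_singleton_le_iff_mem _).mpr
      (Submodule.subset_span (Finset.mem_image_of_mem β ht)) (hβ t ht v)
  have hroot (i : B) : Pi.single i 1 ∈ U := by
    have := hU (cs.simple i) (Pi.single i 1)
    rw [CoxeterSystem.geometricRepresentation_simple, CoxeterMatrix.geometricReflection,
      reflection_apply_self, ← neg_add', ← two_smul ℝ, neg_mem_iff] at this
    exact (U.smul_mem_iff two_ne_zero).mp this
  have hU_top : U = ⊤ := by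
    rw [eq_top_iff, ← (Pi.basisFun ℝ B).span_eq, Submodule.span_le]
    rintro _ ⟨i, rfl⟩
    simpa using hroot i
  calc Fintype.card B = finrank ℝ (B → ℝ) := (finrank_pi ℝ).symm
    _ = finrank ℝ U := by rw [hU_top, finrank_top]
    _ ≤ (T.image β).card := finrank_span_finset_le_card _
    _ ≤ T.card := Finset.card_image_le
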